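/- arXiv:1808.00329 — 6 statements merged into one kernel-verified Lean document; each statement's English description precedes it below -/
import Mathlib

section
/- Adams' conditioning satisfies CPK3: the revised measure agrees with the original on the marginal of Y, i.e., (P ∘_A P')(Y = y') = P(Y = y') for every y' in Ω_Y. -/
open Finset

/-- Adams' conditioning: `(P ∘_A P')(α) = P(α ∩ {Y ≠ y}) +
Σ_x P(α ∩ {X=x, Y=y}) · P'(x) / P(X=x | Y=y)` on `Ω = ΩX × ΩY × ΩZ`. -/
noncomputable def adams {ΩX ΩY ΩZ : Type*} [Fintype ΩX] [Fintype ΩY] [Fintype ΩZ]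
    [DecidableEq ΩX] [DecidableEq ΩY]
    (P : ΩX × ΩY × ΩZ → ℝ) (y : ΩY) (P' : ΩX → ℝ) (α : Finset (ΩX × ΩY × ΩZ)) : ℝ :=
  (∑ ω ∈ α.filter (fun ω => ω.2.1 ≠ y), P ω) +
  ∑ x : ΩX, (∑ ω ∈ α.filter (fun ω => ω.1 = x ∧ ω.2.1 = y), P ω) * P' x /
    ((∑ ω ∈ Finset.univ.filter (fun ω => ω.1 = x ∧ ω.2.1 = y), P ω) /
      (∑ ω ∈ Finset.univ.filter (fun ω => ω.2.1 = y), P ω))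

/-- Adams' conditioning satisfies CPK3: the marginal of `Y` is preserved:
`(P ∘_A P')(Y = y') = P(Y = y')` for every `y'`. -/
theorem adams_CPK3 {ΩX ΩY ΩZ : Type*} [Fintype ΩX] [Fintype ΩY] [Fintype ΩZ]
    [DecidableEq ΩX] [DecidableEq ΩY]
    (P : ΩX × ΩY × ΩZ → ℝ) (hP0 : ∀ ω, 0 ≤ P ω) (hP1 : ∑ ω, P ω = 1)
    (y : ΩY) (hy : 0 < ∑ ω ∈ Finset.univ.filter (fun ω => ω.2.1 = y), P ω)
    (hxy : ∀ x : ΩX, 0 < ∑ ω ∈ Finset.univ.filter (fun ω => ω.1 = x ∧ ω.2.1 = y), P ω)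
    (P' : ΩX → ℝ) (hP'0 : ∀ x, 0 ≤ P' x) (hP'1 : ∑ x, P' x = 1) :
    ∀ y' : ΩY, adams P y P' (Finset.univ.filter (fun ω => ω.2.1 = y')) =
      ∑ ω ∈ Finset.univ.filter (fun ω => ω.2.1 = y'), P ω := by
  intro y'
  unfold adams
  simp only [Finset.filter_filter]
  by_cases h : y' = y
  · subst h
    have h1 : (Finset.univ.filter (fun ω : ΩX × ΩY × ΩZ => ω.2.1 = y' ∧ ω.2.1 ≠ y')) = ∅ := by
      apply Finset.filter_eq_empty_iff.mpr; intro ω _; tauto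
    rw [h1]
    have h2 : ∀ x : ΩX,
        (Finset.univ.filter (fun ω : ΩX × ΩY × ΩZ => ω.2.1 = y' ∧ ω.1 = x ∧ ω.2.1 = y')) =
        (Finset.univ.filter (fun ω : ΩX × ΩY × ΩZ => ω.1 = x ∧ ω.2.1 = y')) := by
      intro x; apply Finset.filter_congr; intro ω _; tauto
    simp only [Finset.sum_empty, zero_add]
    have h3 : ∀ x : ΩX,
        (∑ ω ∈ Finset.univ.filter (fun ω : ΩX × ΩY × ΩZ => ω.2.1 = y' ∧ ω.1 = x ∧ ω.2.1 = y'), P ω) * P' x /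
        ((∑ ω ∈ Finset.univ.filter (fun ω : ΩX × ΩY × ΩZ => ω.1 = x ∧ ω.2.1 = y'), P ω) /
          (∑ ω ∈ Finset.univ.filter (fun ω : ΩX × ΩY × ΩZ => ω.2.1 = y'), P ω)) =
        (∑ ω ∈ Finset.univ.filter (fun ω : ΩX × ΩY × ΩZ => ω.2.1 = y'), P ω) * P' x := by
      intro x
      have hx := (hxy x).ne'
      rw [h2 x, div_div_eq_mul_div, mul_comm (∑ ω ∈ Finset.univ.filter
          (fun ω : ΩX × ΩY × ΩZ => ω.1 = x ∧ ω.2.1 = y'), P ω) (P' x), mul_assoc,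
        mul_comm (∑ ω ∈ Finset.univ.filter (fun ω : ΩX × ΩY × ΩZ => ω.1 = x ∧ ω.2.1 = y'), P ω),
        ← mul_assoc, mul_div_assoc, div_self hx, mul_one, mul_comm]
    rw [Finset.sum_congr rfl (fun x _ => h3 x), ← Finset.mul_sum, hP'1, mul_one]
  · have h1 : (Finset.univ.filter (fun ω : ΩX × ΩY × ΩZ => ω.2.1 = y' ∧ ω.2.1 ≠ y)) =
        (Finset.univ.filter (fun ω : ΩX × ΩY × ΩZ => ω.2.1 = y')) := by
      apply Finset.filter_congr; intro ω _
      constructor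
      · tauto
      · intro hω; exact ⟨hω, by rw [hω]; exact h⟩
    have h2 : ∀ x : ΩX,
        (Finset.univ.filter (fun ω : ΩX × ΩY × ΩZ => ω.2.1 = y' ∧ ω.1 = x ∧ ω.2.1 = y)) = ∅ := by
      intro x; apply Finset.filter_eq_empty_iff.mpr; intro ω _
      rintro ⟨h1, _, h2⟩; exact h (h1 ▸ h2 ▸ rfl)
    simp only [h1, h2, Finset.sum_empty, zero_mul, zero_div, Finset.sum_const_zero, add_zero]
end

section
/- Adams' conditioning satisfies CPK2: for every y' ≠ y in Ω_Y with P(Y=y') > 0, and every event α, (P ∘_A P')(α | Y = y') = P(α | Y = y'). -/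
open Finset

/-- Adams' conditioning satisfies CPK2: for every `y' ≠ y` with `P(Y=y') > 0` and every
event `α`, `(P ∘_A P')(α | Y=y') = P(α | Y=y')`. -/
theorem adams_CPK2 {ΩX ΩY ΩZ : Type*} [Fintype ΩX] [Fintype ΩY] [Fintype ΩZ]
    [DecidableEq ΩX] [DecidableEq ΩY]
    (P : ΩX × ΩY × ΩZ → ℝ) (hP0 : ∀ ω, 0 ≤ P ω) (hP1 : ∑ ω, P ω = 1)
    (y : ΩY) (hy : 0 < ∑ ω ∈ Finset.univ.filter (fun ω => ω.2.1 = y), P ω)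
    (hxy : ∀ x : ΩX, 0 < ∑ ω ∈ Finset.univ.filter (fun ω => ω.1 = x ∧ ω.2.1 = y), P ω)
    (P' : ΩX → ℝ) (hP'0 : ∀ x, 0 ≤ P' x) (hP'1 : ∑ x, P' x = 1) :
    ∀ y' : ΩY, y' ≠ y → 0 < ∑ ω ∈ Finset.univ.filter (fun ω => ω.2.1 = y'), P ω →
      ∀ α : Finset (ΩX × ΩY × ΩZ),
        adams P y P' (α.filter (fun ω => ω.2.1 = y')) /
            adams P y P' (Finset.univ.filter (fun ω => ω.2.1 = y')) =
          (∑ ω ∈ α.filter (fun ω => ω.2.1 = y'), P ω) /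
            (∑ ω ∈ Finset.univ.filter (fun ω => ω.2.1 = y'), P ω) := by
  intro y' hy' _ α
  have key : ∀ s : Finset (ΩX × ΩY × ΩZ),
      adams P y P' (s.filter (fun ω => ω.2.1 = y')) =
        ∑ ω ∈ s.filter (fun ω => ω.2.1 = y'), P ω := by
    intro s
    unfold adams
    rw [Finset.filter_filter]
    have h1 : (s.filter fun ω => ω.2.1 = y' ∧ ω.2.1 ≠ y) = s.filter (fun ω => ω.2.1 = y') := by
      apply Finset.filter_congr
      intro ω _
      simp only [ne_eq, eq_iff_iff, and_iff_left_iff_imp]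
      rintro h rfl; exact hy' h.symm
    have h2 : ∀ x : ΩX,
        ((s.filter fun ω => ω.2.1 = y').filter fun ω => ω.1 = x ∧ ω.2.1 = y) = ∅ := by
      intro x
      rw [Finset.filter_eq_empty_iff]
      intro ω hω h
      rw [Finset.mem_filter] at hω
      exact hy' (hω.2 ▸ h.2)
    rw [h1]
    have : ∀ x : ΩX, (∑ ω ∈ (s.filter fun ω => ω.2.1 = y').filter
        (fun ω => ω.1 = x ∧ ω.2.1 = y), P ω) * P' x /
        ((∑ ω ∈ Finset.univ.filter (fun ω => ω.1 = x ∧ ω.2.1 = y), P ω) /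
          (∑ ω ∈ Finset.univ.filter (fun ω => ω.2.1 = y), P ω)) = 0 := by
      intro x
      rw [h2 x, Finset.sum_empty, zero_mul, zero_div]
    rw [Finset.sum_congr rfl (fun x _ => this x), Finset.sum_const_zero, add_zero]
  rw [key α, key Finset.univ]
end

section
/- Adams' conditioning satisfies CPK1: for every x ∈ Ω_X with P'(x) > 0 and every event α, (P ∘_A P')(α | X=x, Y=y) = P(α | X=x, Y=y). -/
open Finset

lemma adams_on_cell {ΩX ΩY ΩZ : Type*} [Fintype ΩX] [Fintype ΩY] [Fintype ΩZ]
    [DecidableEq ΩX] [DecidableEq ΩY]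
    (P : ΩX × ΩY × ΩZ → ℝ) (y : ΩY) (P' : ΩX → ℝ) (x : ΩX)
    (s : Finset (ΩX × ΩY × ΩZ)) :
    adams P y P' (s.filter (fun ω => ω.1 = x ∧ ω.2.1 = y)) =
      (∑ ω ∈ s.filter (fun ω => ω.1 = x ∧ ω.2.1 = y), P ω) * P' x /
        ((∑ ω ∈ Finset.univ.filter (fun ω => ω.1 = x ∧ ω.2.1 = y), P ω) /
          (∑ ω ∈ Finset.univ.filter (fun ω => ω.2.1 = y), P ω)) := by
  unfold adams
  rw [Finset.filter_filter]
  have h1 : (s.filter fun ω => (ω.1 = x ∧ ω.2.1 = y) ∧ ω.2.1 ≠ y) = ∅ := by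
    apply Finset.filter_eq_empty_iff.2
    rintro ω _ ⟨⟨_, h⟩, hne⟩; exact hne h
  rw [h1, Finset.sum_empty, zero_add]
  rw [Finset.sum_eq_single x]
  · rw [Finset.filter_filter]
    simp only [and_self]
  · intro b _ hb
    have : ((s.filter fun ω => ω.1 = x ∧ ω.2.1 = y).filter
        fun ω => ω.1 = b ∧ ω.2.1 = y) = ∅ := by
      apply Finset.filter_eq_empty_iff.2
      rintro ω hω ⟨hb', _⟩
      rw [Finset.mem_filter] at hω
      exact hb (hb' ▸ hω.2.1 ▸ rfl)
    rw [this, Finset.sum_empty, zero_mul, zero_div]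
  · intro h; exact absurd (Finset.mem_univ x) h

/-- Adams' conditioning satisfies CPK1: for every `x` with `P'(x) > 0` and every event `α`,
`(P ∘_A P')(α | X=x, Y=y) = P(α | X=x, Y=y)`. -/
theorem adams_CPK1 {ΩX ΩY ΩZ : Type*} [Fintype ΩX] [Fintype ΩY] [Fintype ΩZ]
    [DecidableEq ΩX] [DecidableEq ΩY]
    (P : ΩX × ΩY × ΩZ → ℝ) (hP0 : ∀ ω, 0 ≤ P ω) (hP1 : ∑ ω, P ω = 1)
    (y : ΩY) (hy : 0 < ∑ ω ∈ Finset.univ.filter (fun ω => ω.2.1 = y), P ω)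
    (hxy : ∀ x : ΩX, 0 < ∑ ω ∈ Finset.univ.filter (fun ω => ω.1 = x ∧ ω.2.1 = y), P ω)
    (P' : ΩX → ℝ) (hP'0 : ∀ x, 0 ≤ P' x) (hP'1 : ∑ x, P' x = 1) :
    ∀ x : ΩX, 0 < P' x →
      ∀ α : Finset (ΩX × ΩY × ΩZ),
        adams P y P' (α.filter (fun ω => ω.1 = x ∧ ω.2.1 = y)) /
            adams P y P' (Finset.univ.filter (fun ω => ω.1 = x ∧ ω.2.1 = y)) =
          (∑ ω ∈ α.filter (fun ω => ω.1 = x ∧ ω.2.1 = y), P ω) /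
            (∑ ω ∈ Finset.univ.filter (fun ω => ω.1 = x ∧ ω.2.1 = y), P ω) := by
  intro x hx α
  rw [adams_on_cell, adams_on_cell]
  have hr : (∑ ω ∈ Finset.univ.filter (fun ω => ω.1 = x ∧ ω.2.1 = y), P ω) /
      (∑ ω ∈ Finset.univ.filter (fun ω => ω.2.1 = y), P ω) > 0 :=
    div_pos (hxy x) hy
  have hB := (hxy x).ne'
  have hc := hx.ne'
  have hr' := hr.ne'
  rw [div_div_div_cancel_right₀]
  · field_simp
  · exact hr'
end

section
/- Any probability measure P° satisfying conditional probability kinematics CPK1–CPK4 with respect to P, y, and evidence P' is unique and equals the Adams revision P ∘_A P'. -/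
open Finset

/-- Any probability measure `Q` (given by its mass function) satisfying conditional
probability kinematics CPK1–CPK4 w.r.t. `P`, `y` and evidence `P'` equals the Adams
revision `P ∘_A P'`. -/
theorem conditional_probability_kinematics_unique
    {ΩX ΩY ΩZ : Type*} [Fintype ΩX] [Fintype ΩY] [Fintype ΩZ]
    [DecidableEq ΩX] [DecidableEq ΩY]
    (P : ΩX × ΩY × ΩZ → ℝ) (hP0 : ∀ ω, 0 ≤ P ω) (hP1 : ∑ ω, P ω = 1)
    (y : ΩY) (hy : 0 < ∑ ω ∈ Finset.univ.filter (fun ω => ω.2.1 = y), P ω)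
    (hxy : ∀ x : ΩX, 0 < ∑ ω ∈ Finset.univ.filter (fun ω => ω.1 = x ∧ ω.2.1 = y), P ω)
    (P' : ΩX → ℝ) (hP'0 : ∀ x, 0 < P' x) (hP'1 : ∑ x, P' x = 1)
    (Q : ΩX × ΩY × ΩZ → ℝ) (hQ0 : ∀ ω, 0 ≤ Q ω) (hQ1 : ∑ ω, Q ω = 1)
    (CPK1 : ∀ (x : ΩX) (α : Finset (ΩX × ΩY × ΩZ)),
      (∑ ω ∈ α.filter (fun ω => ω.1 = x ∧ ω.2.1 = y), Q ω) /
          (∑ ω ∈ Finset.univ.filter (fun ω => ω.1 = x ∧ ω.2.1 = y), Q ω) =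
        (∑ ω ∈ α.filter (fun ω => ω.1 = x ∧ ω.2.1 = y), P ω) /
          (∑ ω ∈ Finset.univ.filter (fun ω => ω.1 = x ∧ ω.2.1 = y), P ω))
    (CPK2 : ∀ y' : ΩY, y' ≠ y → ∀ α : Finset (ΩX × ΩY × ΩZ),
      (∑ ω ∈ α.filter (fun ω => ω.2.1 = y'), Q ω) /
          (∑ ω ∈ Finset.univ.filter (fun ω => ω.2.1 = y'), Q ω) =
        (∑ ω ∈ α.filter (fun ω => ω.2.1 = y'), P ω) /
          (∑ ω ∈ Finset.univ.filter (fun ω => ω.2.1 = y'), P ω))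
    (CPK3 : ∀ y' : ΩY,
      (∑ ω ∈ Finset.univ.filter (fun ω => ω.2.1 = y'), Q ω) =
        ∑ ω ∈ Finset.univ.filter (fun ω => ω.2.1 = y'), P ω)
    (CPK4 : ∀ x : ΩX,
      (∑ ω ∈ Finset.univ.filter (fun ω => ω.1 = x ∧ ω.2.1 = y), Q ω) /
          (∑ ω ∈ Finset.univ.filter (fun ω => ω.2.1 = y), Q ω) = P' x) :
    ∀ α : Finset (ΩX × ΩY × ΩZ), (∑ ω ∈ α, Q ω) = adams P y P' α := by
  intro α
  -- fiberwise decompositions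
  have fiberY : ∀ R : ΩX × ΩY × ΩZ → ℝ,
      (∑ ω ∈ α.filter (fun ω => ω.2.1 ≠ y), R ω) =
        ∑ y' ∈ Finset.univ.filter (fun y' => y' ≠ y),
          ∑ ω ∈ α.filter (fun ω => ω.2.1 = y'), R ω := by
    intro R
    have mid : (∑ y' ∈ Finset.univ.filter (fun y' => y' ≠ y),
        ∑ ω ∈ α.filter (fun ω => ω.2.1 = y'), R ω) =
        ∑ ω ∈ α, ∑ y' ∈ Finset.univ.filter (fun y' => y' ≠ y),
          if ω.2.1 = y' then R ω else 0 := by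
      rw [← Finset.sum_comm]
      exact Finset.sum_congr rfl fun y' _ => Finset.sum_filter _ _
    rw [mid, Finset.sum_filter]
    refine Finset.sum_congr rfl fun ω _ => ?_
    rw [Finset.sum_ite_eq (Finset.univ.filter (fun y' => y' ≠ y)) ω.2.1]
    simp [Finset.mem_filter]
  have fiberX : ∀ R : ΩX × ΩY × ΩZ → ℝ,
      (∑ ω ∈ α.filter (fun ω => ω.2.1 = y), R ω) =
        ∑ x : ΩX, ∑ ω ∈ α.filter (fun ω => ω.1 = x ∧ ω.2.1 = y), R ω := by
    intro R
    simp only [Finset.sum_filter, ite_and]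
    rw [Finset.sum_comm]
    refine Finset.sum_congr rfl fun ω _ => ?_
    simp [Finset.sum_ite_eq' Finset.univ ω.1]
  -- part A : off-y part agrees
  have hA : (∑ ω ∈ α.filter (fun ω => ω.2.1 ≠ y), Q ω) =
      ∑ ω ∈ α.filter (fun ω => ω.2.1 ≠ y), P ω := by
    rw [fiberY Q, fiberY P]
    refine Finset.sum_congr rfl fun y' hy' => ?_
    have hne : y' ≠ y := (Finset.mem_filter.mp hy').2
    set DP := ∑ ω ∈ Finset.univ.filter (fun ω => ω.2.1 = y'), P ω with hDP
    rcases eq_or_lt_of_le (Finset.sum_nonneg (fun ω _ => hP0 ω) : 0 ≤ DP) with h0 | hpos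
    · -- total mass of y' is zero: both sides are zero
      have hPz : ∀ ω ∈ Finset.univ.filter (fun ω : ΩX × ΩY × ΩZ => ω.2.1 = y'), P ω = 0 :=
        (Finset.sum_eq_zero_iff_of_nonneg (fun ω _ => hP0 ω)).mp h0.symm
      have hQz : ∀ ω ∈ Finset.univ.filter (fun ω : ΩX × ΩY × ΩZ => ω.2.1 = y'), Q ω = 0 :=
        (Finset.sum_eq_zero_iff_of_nonneg (fun ω _ => hQ0 ω)).mp (by rw [CPK3 y']; exact h0.symm)
      rw [Finset.sum_eq_zero, Finset.sum_eq_zero]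
      · intro ω hω
        exact hPz ω (Finset.mem_filter.mpr ⟨Finset.mem_univ _, (Finset.mem_filter.mp hω).2⟩)
      · intro ω hω
        exact hQz ω (Finset.mem_filter.mpr ⟨Finset.mem_univ _, (Finset.mem_filter.mp hω).2⟩)
    · have h2 := CPK2 y' hne α
      rw [CPK3 y'] at h2
      have hD : DP ≠ 0 := ne_of_gt hpos
      have := (div_eq_div_iff hD hD).mp h2
      exact mul_right_cancel₀ hD this
  -- part B : the y-part
  have hB : ∀ x : ΩX,
      (∑ ω ∈ α.filter (fun ω => ω.1 = x ∧ ω.2.1 = y), Q ω) =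
        (∑ ω ∈ α.filter (fun ω => ω.1 = x ∧ ω.2.1 = y), P ω) * P' x /
          ((∑ ω ∈ Finset.univ.filter (fun ω => ω.1 = x ∧ ω.2.1 = y), P ω) /
            (∑ ω ∈ Finset.univ.filter (fun ω => ω.2.1 = y), P ω)) := by
    intro x
    have hSy := hy
    have hSxy := hxy x
    have hQy : (∑ ω ∈ Finset.univ.filter (fun ω => ω.2.1 = y), Q ω) =
        ∑ ω ∈ Finset.univ.filter (fun ω => ω.2.1 = y), P ω := CPK3 y
    have h4 := CPK4 x
    rw [hQy] at h4
    have hQxy : (∑ ω ∈ Finset.univ.filter (fun ω => ω.1 = x ∧ ω.2.1 = y), Q ω) =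
        P' x * ∑ ω ∈ Finset.univ.filter (fun ω => ω.2.1 = y), P ω := by
      field_simp at h4
      linarith [h4]
    have h1 := CPK1 x α
    rw [hQxy] at h1
    have hP'x := hP'0 x
    have : (∑ ω ∈ α.filter (fun ω => ω.1 = x ∧ ω.2.1 = y), Q ω) =
        (∑ ω ∈ α.filter (fun ω => ω.1 = x ∧ ω.2.1 = y), P ω) /
          (∑ ω ∈ Finset.univ.filter (fun ω => ω.1 = x ∧ ω.2.1 = y), P ω) *
          (P' x * ∑ ω ∈ Finset.univ.filter (fun ω => ω.2.1 = y), P ω) := by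
      rw [← h1]
      field_simp
    rw [this]
    field_simp
  -- combine
  rw [← Finset.sum_filter_add_sum_filter_not α (fun ω => ω.2.1 ≠ y), adams, hA]
  simp only [not_not]
  rw [fiberX Q]
  congr 1
  exact Finset.sum_congr rfl fun x _ => hB x
end

section
/- Jeffrey's imaging satisfies IK2 even under inconsistent evidence: for any joint PMF P on Ω_X × Ω_Y (possibly with P(X=x)=0 for some x) and any probability assignment P' on Ω_X, the marginal of the Jeffrey image on X equals P': (P ∘_{jI} P')(X = x) = P'(x) for every x. -/
open Finset

/-- The image of a joint PMF `P` on `Ω_X × Ω_Y` on the value `x`, at an event `α`,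
via the closest-world function `γ((x'', y), x) = (x, y)`:
`P°_x(α) = Σ_{ω' ∈ α} Σ_ω P(ω) · 1[γ(ω, x) = ω']`. -/
noncomputable def imgOn {ΩX ΩY : Type*} [Fintype ΩX] [Fintype ΩY]
    [DecidableEq ΩX] [DecidableEq ΩY]
    (P : ΩX × ΩY → ℝ) (x : ΩX) (α : Finset (ΩX × ΩY)) : ℝ :=
  ∑ ω' ∈ α, ∑ ω : ΩX × ΩY, P ω * (if (x, ω.2) = ω' then 1 else 0)

/-- Jeffrey's imaging: `(P ∘_{jI} P')(α) = Σ_x P°_x(α) · P'(x)`. -/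
noncomputable def jimaging {ΩX ΩY : Type*} [Fintype ΩX] [Fintype ΩY]
    [DecidableEq ΩX] [DecidableEq ΩY]
    (P : ΩX × ΩY → ℝ) (P' : ΩX → ℝ) (α : Finset (ΩX × ΩY)) : ℝ :=
  ∑ x : ΩX, imgOn P x α * P' x

lemma imgOn_filter {ΩX ΩY : Type*} [Fintype ΩX] [Fintype ΩY]
    [DecidableEq ΩX] [DecidableEq ΩY]
    (P : ΩX × ΩY → ℝ) (hP1 : ∑ ω, P ω = 1) (x' x : ΩX) :
    imgOn P x' (Finset.univ.filter (fun ω => ω.1 = x)) =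
      if x' = x then 1 else 0 := by
  unfold imgOn
  rw [Finset.sum_comm]
  have key : ∀ ω : ΩX × ΩY,
      (∑ ω' ∈ Finset.univ.filter (fun ω => ω.1 = x), P ω * (if (x', ω.2) = ω' then 1 else 0))
        = if x' = x then P ω else 0 := by
    intro ω
    simp only [mul_ite, mul_one, mul_zero]
    rw [Finset.sum_ite_eq]
    simp [eq_comm]
  rw [Finset.sum_congr rfl (fun ω _ => key ω)]
  by_cases h : x' = x
  · simp [h, hP1]
  · simp [h]

/-- Jeffrey's imaging satisfies IK2 even under inconsistent evidence: the `X`-marginal of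
the Jeffrey image equals `P'`, for any joint PMF `P` (possibly with `P(X=x) = 0`). -/
theorem jimaging_IK2 {ΩX ΩY : Type*} [Fintype ΩX] [Fintype ΩY]
    [DecidableEq ΩX] [DecidableEq ΩY]
    (P : ΩX × ΩY → ℝ) (hP0 : ∀ ω, 0 ≤ P ω) (hP1 : ∑ ω, P ω = 1)
    (P' : ΩX → ℝ) (hP'0 : ∀ x, 0 ≤ P' x) (hP'1 : ∑ x, P' x = 1) :
    ∀ x : ΩX, jimaging P P' (Finset.univ.filter (fun ω => ω.1 = x)) = P' x := by
  intro x
  unfold jimaging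
  rw [Finset.sum_congr rfl (fun x' _ => by rw [imgOn_filter P hP1 x' x])]
  simp [Finset.sum_ite_eq', Finset.mem_univ]
end

section
/- Jeffrey's imaging factorizes: for a joint PMF P on Ω_X × Ω_Y and evidence P' on Ω_X, the Jeffrey image is the product measure (P ∘_{jI} P')(x, y) = P'(x) · P(Y = y) for all x, y; in particular the Y-marginal is preserved and, whenever P'(x) > 0, the conditional of Y given X = x under the revised measure equals the original Y-marginal. -/
open Finset

lemma imgOn_eq {ΩX ΩY : Type*} [Fintype ΩX] [Fintype ΩY]
    [DecidableEq ΩX] [DecidableEq ΩY]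
    (P : ΩX × ΩY → ℝ) (x : ΩX) (α : Finset (ΩX × ΩY)) :
    imgOn P x α = ∑ ω : ΩX × ΩY, P ω * (if (x, ω.2) ∈ α then 1 else 0) := by
  rw [imgOn, Finset.sum_comm]
  refine Finset.sum_congr rfl fun ω _ => ?_
  rw [← Finset.mul_sum, Finset.sum_ite_eq α (x, ω.2) (fun _ => (1:ℝ))]

/-- Jeffrey's imaging factorizes: `(P ∘_{jI} P')(x, y) = P'(x) · P(Y=y)`; in particular the
`Y`-marginal is preserved and, whenever `P'(x) > 0`, the revised conditional of `Y` given
`X = x` equals the original `Y`-marginal. -/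
theorem jimaging_factorizes {ΩX ΩY : Type*} [Fintype ΩX] [Fintype ΩY]
    [DecidableEq ΩX] [DecidableEq ΩY]
    (P : ΩX × ΩY → ℝ) (hP0 : ∀ ω, 0 ≤ P ω) (hP1 : ∑ ω, P ω = 1)
    (P' : ΩX → ℝ) (hP'0 : ∀ x, 0 ≤ P' x) (hP'1 : ∑ x, P' x = 1) :
    (∀ (x : ΩX) (y : ΩY), jimaging P P' {(x, y)} =
      P' x * ∑ ω ∈ Finset.univ.filter (fun ω : ΩX × ΩY => ω.2 = y), P ω) ∧
    (∀ y : ΩY, jimaging P P' (Finset.univ.filter (fun ω => ω.2 = y)) =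
      ∑ ω ∈ Finset.univ.filter (fun ω : ΩX × ΩY => ω.2 = y), P ω) ∧
    (∀ (x : ΩX) (y : ΩY), 0 < P' x →
      jimaging P P' {(x, y)} / jimaging P P' (Finset.univ.filter (fun ω => ω.1 = x)) =
        ∑ ω ∈ Finset.univ.filter (fun ω : ΩX × ΩY => ω.2 = y), P ω) := by
  have h1 : ∀ (x : ΩX) (y : ΩY), jimaging P P' {(x, y)} =
      P' x * ∑ ω ∈ Finset.univ.filter (fun ω : ΩX × ΩY => ω.2 = y), P ω := by
    intro x y
    have himg : ∀ x' : ΩX, imgOn P x' {(x, y)} =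
        if x' = x then ∑ ω ∈ Finset.univ.filter (fun ω : ΩX × ΩY => ω.2 = y), P ω else 0 := by
      intro x'
      rw [imgOn_eq]
      by_cases h : x' = x
      · subst h
        rw [if_pos rfl, Finset.sum_filter]
        refine Finset.sum_congr rfl fun ω _ => ?_
        simp [Prod.ext_iff, mul_comm, mul_ite]
      · rw [if_neg h]
        refine Finset.sum_eq_zero fun ω _ => ?_
        simp [Prod.ext_iff, h]
    rw [jimaging]
    rw [Finset.sum_congr rfl (fun x' _ => by rw [himg x'])]
    simp [Finset.sum_ite_eq', mul_comm]
  have h2 : ∀ y : ΩY, jimaging P P' (Finset.univ.filter (fun ω => ω.2 = y)) =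
      ∑ ω ∈ Finset.univ.filter (fun ω : ΩX × ΩY => ω.2 = y), P ω := by
    intro y
    have himg : ∀ x' : ΩX, imgOn P x' (Finset.univ.filter (fun ω : ΩX × ΩY => ω.2 = y)) =
        ∑ ω ∈ Finset.univ.filter (fun ω : ΩX × ΩY => ω.2 = y), P ω := by
      intro x'
      rw [imgOn_eq, Finset.sum_filter]
      refine Finset.sum_congr rfl fun ω _ => ?_
      simp [mul_comm, mul_ite]
    rw [jimaging, Finset.sum_congr rfl (fun x' _ => by rw [himg x']), ← Finset.mul_sum, hP'1,
      mul_one]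
  have h3 : ∀ x : ΩX, jimaging P P' (Finset.univ.filter (fun ω : ΩX × ΩY => ω.1 = x)) = P' x := by
    intro x
    have himg : ∀ x' : ΩX, imgOn P x' (Finset.univ.filter (fun ω : ΩX × ΩY => ω.1 = x)) =
        if x' = x then 1 else 0 := by
      intro x'
      rw [imgOn_eq]
      by_cases h : x' = x
      · subst h
        simp [hP1]
      · simp [h]
    rw [jimaging, Finset.sum_congr rfl (fun x' _ => by rw [himg x'])]
    simp [Finset.sum_ite_eq']
  refine ⟨h1, h2, fun x y hx => ?_⟩
  rw [h1, h3, mul_comm, mul_div_assoc, div_self (ne_of_gt hx), mul_one]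
end
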